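/- arXiv:1902.02145 — 8 statements merged into one kernel-verified Lean document; each statement's English description precedes it below -/
import Mathlib

section
/- Let u₁,u₂,u₃,v₁,v₂,v₃ be nonzero real numbers and let x : ℝ³ × ℝ³ → ℝ⁶ be the map x(u,v) = (u₁v₂, u₃v₂, u₃v₁, u₂v₁, u₂v₃, u₁v₃). Then the 6×6 Jacobian matrix of x at (u,v), i.e. the matrix of partial derivatives of the six components with respect to u₁,u₂,u₃,v₁,v₂,v₃, has rank exactly 5. -/
/-!
Each component of `x` is a product `uᵢ vⱼ`, so the Jacobian at `(u, v)` sends a tangent vector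
`(a, b)` to the vector of the `uᵢ bⱼ + aᵢ vⱼ`. Since no coordinate vanishes, `(a, b)` is in the
kernel iff `r = (a / u, b / v)` satisfies `rᵢ + rⱼ = 0` for each of the six index pairs. These pairs
form the hexagon `u₁ v₂ u₃ v₁ u₂ v₃`, which is connected and bipartite, so the kernel is the line
through `(u, -v)`, the direction of the scaling symmetry `x(tu, v/t) = x(u, v)`. Rank–nullity then
gives rank `6 - 1 = 5`.
-/

noncomputable def xMap (p : Fin 6 → ℝ) : Fin 6 → ℝ :=
  ![p 0 * p 4, p 2 * p 4, p 2 * p 3, p 1 * p 3, p 1 * p 5, p 0 * p 5]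

noncomputable def xJacobian (p : Fin 6 → ℝ) : Matrix (Fin 6) (Fin 6) ℝ :=
  Matrix.of fun m k => fderiv ℝ (fun q => xMap q m) p (Pi.single k 1)

open Matrix

theorem fderiv_apply_mul_apply {𝕜 ι : Type*} [NontriviallyNormedField 𝕜] [Fintype ι]
    (i j : ι) (p v : ι → 𝕜) :
    fderiv 𝕜 (fun q : ι → 𝕜 => q i * q j) p v = p i * v j + v i * p j := by
  rw [HasFDerivAt.fderiv (f := fun q : ι → 𝕜 => q i * q j)
    ((hasFDerivAt_apply i p).mul (hasFDerivAt_apply j p))]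
  simp [mul_comm]

theorem Matrix.of_apply_single_mulVec {R m n : Type*} [CommSemiring R] [Fintype n]
    [DecidableEq n] (L : m → (n → R) →ₗ[R] R) (x : n → R) :
    (of fun i k => L i (Pi.single k 1)) *ᵥ x = fun i => L i x :=
  LinearMap.toMatrix'_mulVec (LinearMap.pi L) x

theorem Matrix.rank_add_one_eq_card_of_ker_eq_span {K m n : Type*} [Field K] [Fintype n]
    (A : Matrix m n K) {w : n → K} (hw : w ≠ 0) (hker : LinearMap.ker A.mulVecLin = K ∙ w) :
    A.rank + 1 = Fintype.card n := by
  have := LinearMap.finrank_range_add_finrank_ker A.mulVecLin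
  rwa [hker, finrank_span_singleton hw, Module.finrank_fintype_fun_eq_card] at this

theorem div_eq_neg_div_of_mul_add_mul_eq_zero {K : Type*} [Field K] {a b x y : K}
    (ha : a ≠ 0) (hb : b ≠ 0) (h : a * y + x * b = 0) : x / a = -(y / b) := by
  field_simp
  linear_combination h

def uIndex : Fin 6 → Fin 6 := ![0, 2, 2, 1, 1, 0]

def vIndex : Fin 6 → Fin 6 := ![4, 4, 3, 3, 5, 5]

def uvSign : Fin 6 → ℝ := ![1, 1, 1, -1, -1, -1]

theorem xMap_apply (q : Fin 6 → ℝ) (m : Fin 6) : xMap q m = q (uIndex m) * q (vIndex m) := by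
  fin_cases m <;> rfl

theorem xJacobian_mulVec (p x : Fin 6 → ℝ) :
    xJacobian p *ᵥ x = fun m => p (uIndex m) * x (vIndex m) + x (uIndex m) * p (vIndex m) := by
  refine (of_apply_single_mulVec (fun m => (fderiv ℝ (fun q => xMap q m) p).toLinearMap) x).trans ?_
  ext m
  simp only [xMap_apply, ContinuousLinearMap.coe_coe, fderiv_apply_mul_apply]

theorem xJacobian_mulVec_uvSign_mul (p : Fin 6 → ℝ) : xJacobian p *ᵥ (uvSign * p) = 0 := by
  ext m
  rw [xJacobian_mulVec]
  fin_cases m <;> simp [uvSign, uIndex, vIndex]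

theorem eq_smul_uvSign_mul_of_mulVec_eq_zero {p x : Fin 6 → ℝ} (hp : ∀ i, p i ≠ 0)
    (hx : xJacobian p *ᵥ x = 0) : x = (x 0 / p 0) • (uvSign * p) := by
  have edge (m : Fin 6) : x (uIndex m) / p (uIndex m) = -(x (vIndex m) / p (vIndex m)) :=
    div_eq_neg_div_of_mul_add_mul_eq_zero (hp _) (hp _)
      (by simpa [xJacobian_mulVec] using congrFun hx m)
  have ratio (i : Fin 6) : x i / p i = uvSign i * (x 0 / p 0) := by
    have e0 : x 0 / p 0 = -(x 4 / p 4) := edge 0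
    have e1 : x 2 / p 2 = -(x 4 / p 4) := edge 1
    have e2 : x 2 / p 2 = -(x 3 / p 3) := edge 2
    have e3 : x 1 / p 1 = -(x 3 / p 3) := edge 3
    have e5 : x 0 / p 0 = -(x 5 / p 5) := edge 5
    fin_cases i <;> simp [uvSign] <;> linarith
  ext i
  rw [← div_mul_cancel₀ (x i) (hp i), ratio]
  simp only [Pi.smul_apply, Pi.mul_apply, smul_eq_mul]
  ring

theorem ker_mulVecLin_xJacobian {p : Fin 6 → ℝ} (hp : ∀ i, p i ≠ 0) :
    LinearMap.ker (xJacobian p).mulVecLin = ℝ ∙ (uvSign * p) := by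
  refine le_antisymm (fun x hx => Submodule.mem_span_singleton.2
    ⟨_, (eq_smul_uvSign_mul_of_mulVec_eq_zero hp hx).symm⟩) ?_
  rw [Submodule.span_singleton_le_iff_mem]
  exact xJacobian_mulVec_uvSign_mul p

theorem jacobian_rank_eq_five (p : Fin 6 → ℝ) (hp : ∀ i, p i ≠ 0) :
    (xJacobian p).rank = 5 := by
  have hw : uvSign * p ≠ 0 := fun h => hp 0 (by simpa [uvSign] using congrFun h 0)
  have := (xJacobian p).rank_add_one_eq_card_of_ker_eq_span hw (ker_mulVecLin_xJacobian hp)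
  rw [Fintype.card_fin] at this
  omega
end

section
/- Let u₁,u₂,u₃,v₁,v₂,v₃ be nonzero real numbers. Then the characteristic polynomial of H² equals (X − 5)²(X − 1)⁴; in particular, the eigenvalues of H² are 5 with algebraic multiplicity 2 and 1 with algebraic multiplicity 4. -/
/-!
Writing `D = diag(u₁, u₂, u₃, v₁, v₂, v₃)`, the entries of `H` are `Dᵢ Aᵢⱼ / Dⱼ`, where `A` is `H`
with all parameters equal to `1`; so `H = D A D⁻¹` and `H²` has the characteristic polynomial
of `A²`. Up to a relabelling of the indices, `A²` is block diagonal with two copies of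
`B = [[1, 2, 2], [0, 3, 2], [0, 2, 3]]`, whose characteristic polynomial is `(X - 5)(X - 1)²`.
-/

open Matrix Polynomial

/-- The 6×6 matrix H built from nonzero reals u₁,u₂,u₃,v₁,v₂,v₃. -/
noncomputable def Hmat (u1 u2 u3 v1 v2 v3 : ℝ) : Matrix (Fin 6) (Fin 6) ℝ :=
  !![1, u1/u2, u1/u3, u1/v1, 0, u1/v3;
     0, 2, u2/u3, u2/v1, 0, u2/v3;
     0, u3/u2, 2, u3/v1, 0, u3/v3;
     0, -v1/u2, -v1/u3, -2, 0, -v1/v3;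
     0, -v2/u2, -v2/u3, -v2/v1, -1, -v2/v3;
     0, -v3/u2, -v3/u3, -v3/v1, 0, -2]

theorem Matrix.charpoly_eq_of_semiconjBy {R n : Type*} [CommRing R] [Fintype n] [DecidableEq n]
    {P M N : Matrix n n R} (h : SemiconjBy P M N) (hP : IsUnit P) : M.charpoly = N.charpoly := by
  obtain ⟨U, rfl⟩ := hP
  have hN : N = U * M * (U : Matrix n n R)⁻¹ := by
    rw [h.eq, ← coe_units_inv, Units.mul_inv_cancel_right]
  rw [hN, charpoly_units_conj]

theorem semiconjBy_diagonal_Hmat_one (u1 u2 u3 v1 v2 v3 : ℝ) (hu2 : u2 ≠ 0) (hu3 : u3 ≠ 0)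
    (hv1 : v1 ≠ 0) (hv3 : v3 ≠ 0) :
    SemiconjBy (diagonal ![u1, u2, u3, v1, v2, v3]) (Hmat 1 1 1 1 1 1)
      (Hmat u1 u2 u3 v1 v2 v3) := by
  unfold SemiconjBy
  ext i j
  rw [diagonal_mul, mul_diagonal]
  fin_cases i <;> fin_cases j <;> simp [Hmat] <;> field_simp

def Hmat_one_sq_block : Matrix (Fin 3) (Fin 3) ℝ := !![1, 2, 2; 0, 3, 2; 0, 2, 3]

theorem charpoly_Hmat_one_sq_block :
    Hmat_one_sq_block.charpoly = (X - C 5) * (X - C 1) ^ 2 := by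
  rw [charpoly, det_fin_three]
  simp [Hmat_one_sq_block, map_ofNat]
  ring

/-- The lower block of `Hmat 1 1 1 1 1 1 ^ 2` is `Hmat_one_sq_block` with its first two indices
swapped. -/
def Hmat_one_sq_blockEquiv : Fin 3 ⊕ Fin 3 ≃ Fin 6 :=
  (Equiv.sumCongr (Equiv.refl _) (Equiv.swap 0 1)).trans finSumFinEquiv

theorem Hmat_one_sq_eq_reindex :
    Hmat 1 1 1 1 1 1 ^ 2 = reindex Hmat_one_sq_blockEquiv Hmat_one_sq_blockEquiv
      (fromBlocks Hmat_one_sq_block 0 0 Hmat_one_sq_block) := by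
  have hsq : Hmat 1 1 1 1 1 1 ^ 2 =
      !![1, 2, 2, 0, 0, 0;
         0, 3, 2, 0, 0, 0;
         0, 2, 3, 0, 0, 0;
         0, 0, 0, 3, 0, 2;
         0, 0, 0, 2, 1, 2;
         0, 0, 0, 2, 0, 3] := by
    ext i j
    fin_cases i <;> fin_cases j <;> simp [sq, mul_apply, Fin.sum_univ_six, Hmat] <;> norm_num
  rw [hsq]
  ext i j
  fin_cases i <;> fin_cases j <;> rfl

theorem charpoly_Hmat_one_sq :
    (Hmat 1 1 1 1 1 1 ^ 2).charpoly = (X - C 5) ^ 2 * (X - C 1) ^ 4 := by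
  rw [Hmat_one_sq_eq_reindex, charpoly_reindex, charpoly_fromBlocks_zero₁₂,
    charpoly_Hmat_one_sq_block]
  ring

/-- The characteristic polynomial of H² is (X − 5)²(X − 1)⁴. -/
theorem charpoly_Hmat_sq (u1 u2 u3 v1 v2 v3 : ℝ) (hu1 : u1 ≠ 0) (hu2 : u2 ≠ 0)
    (hu3 : u3 ≠ 0) (hv1 : v1 ≠ 0) (hv2 : v2 ≠ 0) (hv3 : v3 ≠ 0) :
    ((Hmat u1 u2 u3 v1 v2 v3) ^ 2).charpoly = (X - C 5) ^ 2 * (X - C 1) ^ 4 := by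
  have hD : IsUnit (diagonal ![u1, u2, u3, v1, v2, v3]) := by
    rw [isUnit_diagonal, Pi.isUnit_iff]
    intro i
    fin_cases i <;> simpa
  rw [← charpoly_eq_of_semiconjBy
    ((semiconjBy_diagonal_Hmat_one u1 u2 u3 v1 v2 v3 hu2 hu3 hv1 hv3).pow_right 2) hD]
  exact charpoly_Hmat_one_sq
end

section
/- Let u₁,u₂,u₃,v₁,v₂,v₃ be nonzero real numbers. Then the characteristic polynomial of H equals (X² − 5)(X² − 1)²; in particular det(H) = −5 and H is invertible. -/
/-!
`H` is the conjugate of its specialisation `Hmat 1 1 1 1 1 1` by the diagonal matrix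
`diag(u₁, u₂, u₃, v₁, v₂, v₃)`, so both have the same characteristic polynomial, and that of the
integer matrix is found by cofactor expansion. Its constant term gives `det H = -5`.
-/

open Matrix Polynomial

namespace Matrix

variable {n : Type*} [Fintype n] [DecidableEq n]

theorem charpoly_conj_of_mul_eq_one {R : Type*} [CommRing R] {P Q : Matrix n n R} (h : Q * P = 1)
    (A : Matrix n n R) : (P * A * Q).charpoly = A.charpoly := by
  rw [charpoly_mul_comm, ← mul_assoc, h, one_mul]

theorem charpoly_of_mul_div {K : Type*} [Field K] {d : n → K} (hd : ∀ i, d i ≠ 0)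
    (A : Matrix n n K) : (of fun i j => d i * A i j / d j).charpoly = A.charpoly := by
  have hconj : (of fun i j => d i * A i j / d j) = diagonal d * A * diagonal d⁻¹ := by
    ext i j
    simp [div_eq_mul_inv]
  refine hconj ▸ charpoly_conj_of_mul_eq_one ?_ A
  rw [diagonal_mul_diagonal, ← diagonal_one]
  congr 1
  ext i
  simp [hd i]

end Matrix

theorem Hmat_eq_of_mul_div {u1 u2 u3 v1 v2 v3 : ℝ} (hu1 : u1 ≠ 0) (hu2 : u2 ≠ 0) (hu3 : u3 ≠ 0)
    (hv1 : v1 ≠ 0) (hv2 : v2 ≠ 0) (hv3 : v3 ≠ 0) :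
    Hmat u1 u2 u3 v1 v2 v3 = of fun i j =>
      ![u1, u2, u3, v1, v2, v3] i * Hmat 1 1 1 1 1 1 i j / ![u1, u2, u3, v1, v2, v3] j := by
  ext i j : 1
  fin_cases i <;> fin_cases j <;> simp [Hmat, hu1, hu2, hu3, hv1, hv2, hv3, neg_div]

theorem charpoly_Hmat_one :
    (Hmat 1 1 1 1 1 1).charpoly = (X ^ 2 - C 5) * (X ^ 2 - C 1) ^ 2 := by
  have hchar : charmatrix (Hmat 1 1 1 1 1 1) =
      !![X - 1, -1, -1, -1, 0, -1;
         0, X - 2, -1, -1, 0, -1;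
         0, -1, X - 2, -1, 0, -1;
         0, 1, 1, X + 2, 0, 1;
         0, 1, 1, 1, X + 1, 1;
         0, 1, 1, 1, 0, X + 2] := by
    ext i j : 1
    fin_cases i <;> fin_cases j <;> simp [Hmat, C_ofNat]
  rw [Matrix.charpoly, hchar]
  simp [det_succ_column_zero, Fin.sum_univ_succ, Fin.succAbove, C_ofNat]
  ring

/-- The characteristic polynomial of H is (X² − 5)(X² − 1)²; in particular
det H = −5 and H is invertible. -/
theorem charpoly_Hmat (u1 u2 u3 v1 v2 v3 : ℝ) (hu1 : u1 ≠ 0) (hu2 : u2 ≠ 0)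
    (hu3 : u3 ≠ 0) (hv1 : v1 ≠ 0) (hv2 : v2 ≠ 0) (hv3 : v3 ≠ 0) :
    (Hmat u1 u2 u3 v1 v2 v3).charpoly = (X ^ 2 - C 5) * (X ^ 2 - C 1) ^ 2 ∧
    (Hmat u1 u2 u3 v1 v2 v3).det = -5 ∧
    IsUnit (Hmat u1 u2 u3 v1 v2 v3) := by
  have hd : ∀ i, ![u1, u2, u3, v1, v2, v3] i ≠ 0 := by
    intro i
    fin_cases i <;> assumption
  have hcp : (Hmat u1 u2 u3 v1 v2 v3).charpoly = (X ^ 2 - C 5) * (X ^ 2 - C 1) ^ 2 := by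
    rw [Hmat_eq_of_mul_div hu1 hu2 hu3 hv1 hv2 hv3, charpoly_of_mul_div hd, charpoly_Hmat_one]
  have hdet : (Hmat u1 u2 u3 v1 v2 v3).det = -5 := by
    rw [det_eq_sign_charpoly_coeff, hcp, coeff_zero_eq_eval_zero]
    norm_num
  exact ⟨hcp, hdet, (isUnit_iff_isUnit_det _).2 (by simp [hdet])⟩
end

section
/- Let u₁,u₂,u₃,v₁,v₂,v₃ be nonzero real numbers. The six vectors b₁ = (u₁/u₃, u₂/u₃, 1, 0, 0, 0), b₂ = (0, 0, 0, v₁/v₃, v₂/v₃, 1), b₃ = (0, 0, 0, −v₁/v₃, 0, 1), b₄ = (0, 0, 0, 0, 1, 0), b₅ = (0, −u₂/u₃, 1, 0, 0, 0), b₆ = (1, 0, 0, 0, 0, 0) form a basis of ℝ⁶ consisting of eigenvectors of H², with H²b₁ = 5b₁, H²b₂ = 5b₂, and H²bᵢ = bᵢ for i = 3,4,5,6. -/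
/-!
Write `x = (u₁, u₂, u₃, v₁, v₂, v₃)`, `y = (0, 1/u₂, 1/u₃, 1/v₁, 0, 1/v₃)` and
`S = diag(1, 1, 1, -1, -1, -1)`. Then `H = S (1 + x yᵀ)`, and because `S² = 1` and `yᵀ S x = 0`,
`H² = 1 + x yᵀ + (S x)(S y)ᵀ`. So `H²` fixes the common kernel of `yᵀ` and `(S y)ᵀ`, which
contains `b₃, …, b₆`, and multiplies `x ± S x` by `1 + yᵀ x = 5`; `b₁` and `b₂` are multiples of
`x + S x` and `x - S x`.
-/

open Matrix

namespace Matrix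

variable {n R : Type*} [Fintype n] [DecidableEq n] [CommRing R] {S : Matrix n n R} {x y : n → R}

theorem sq_mul_one_add_vecMulVec (hS : S * S = 1) (hxy : y ⬝ᵥ S *ᵥ x = 0) :
    (S * (1 + vecMulVec x y)) ^ 2 = 1 + vecMulVec x y + vecMulVec (S *ᵥ x) (y ᵥ* S) := by
  have hconj : S * vecMulVec x y * S = vecMulVec (S *ᵥ x) (y ᵥ* S) := by
    rw [mul_vecMulVec, vecMulVec_mul]
  have hcross : vecMulVec (S *ᵥ x) (y ᵥ* S) * vecMulVec x y = 0 := by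
    rw [vecMulVec_mul_vecMulVec, ← dotProduct_mulVec, hxy, zero_smul, vecMulVec_zero]
  calc (S * (1 + vecMulVec x y)) ^ 2
      = (S * S + S * vecMulVec x y * S) * (1 + vecMulVec x y) := by
        rw [sq]
        simp only [Matrix.mul_add, Matrix.add_mul, Matrix.mul_one, Matrix.mul_assoc]
    _ = 1 + vecMulVec x y + vecMulVec (S *ᵥ x) (y ᵥ* S) := by
        rw [hS, hconj, Matrix.add_mul, Matrix.mul_add, Matrix.mul_add, hcross]
        simp only [Matrix.one_mul, Matrix.mul_one, add_zero]

theorem sq_mul_one_add_vecMulVec_mulVec (hS : S * S = 1) (hxy : y ⬝ᵥ S *ᵥ x = 0)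
    (b : n → R) :
    (S * (1 + vecMulVec x y)) ^ 2 *ᵥ b = b + (y ⬝ᵥ b) • x + (y ⬝ᵥ S *ᵥ b) • S *ᵥ x := by
  simp only [sq_mul_one_add_vecMulVec hS hxy, add_mulVec, one_mulVec, vecMulVec_mulVec,
    op_smul_eq_smul, dotProduct_mulVec]

theorem sq_mul_one_add_vecMulVec_mulVec_of_dotProduct_eq_zero (hS : S * S = 1)
    (hxy : y ⬝ᵥ S *ᵥ x = 0) {b : n → R} (hb : y ⬝ᵥ b = 0) (hSb : y ⬝ᵥ S *ᵥ b = 0) :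
    (S * (1 + vecMulVec x y)) ^ 2 *ᵥ b = b := by
  rw [sq_mul_one_add_vecMulVec_mulVec hS hxy, hb, hSb, zero_smul, zero_smul, add_zero, add_zero]

theorem sq_mul_one_add_vecMulVec_mulVec_add (hS : S * S = 1) (hxy : y ⬝ᵥ S *ᵥ x = 0) :
    (S * (1 + vecMulVec x y)) ^ 2 *ᵥ (x + S *ᵥ x) = (1 + y ⬝ᵥ x) • (x + S *ᵥ x) := by
  rw [sq_mul_one_add_vecMulVec_mulVec hS hxy, mulVec_add, mulVec_mulVec, hS, one_mulVec,
    dotProduct_add, dotProduct_add, hxy]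
  module

theorem sq_mul_one_add_vecMulVec_mulVec_sub (hS : S * S = 1) (hxy : y ⬝ᵥ S *ᵥ x = 0) :
    (S * (1 + vecMulVec x y)) ^ 2 *ᵥ (x - S *ᵥ x) = (1 + y ⬝ᵥ x) • (x - S *ᵥ x) := by
  rw [sq_mul_one_add_vecMulVec_mulVec hS hxy, mulVec_sub, mulVec_mulVec, hS, one_mulVec,
    dotProduct_sub, dotProduct_sub, hxy]
  module

end Matrix

namespace Hmat

def signs : Fin 6 → ℝ := ![1, 1, 1, -1, -1, -1]

def col (u1 u2 u3 v1 v2 v3 : ℝ) : Fin 6 → ℝ := ![u1, u2, u3, v1, v2, v3]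

noncomputable def row (u2 u3 v1 v3 : ℝ) : Fin 6 → ℝ := ![0, u2⁻¹, u3⁻¹, v1⁻¹, 0, v3⁻¹]

noncomputable def eigvecs (u1 u2 u3 v1 v2 v3 : ℝ) : Fin 6 → Fin 6 → ℝ :=
  ![![u1/u3, u2/u3, 1, 0, 0, 0],
    ![0, 0, 0, v1/v3, v2/v3, 1],
    ![0, 0, 0, -v1/v3, 0, 1],
    ![0, 0, 0, 0, 1, 0],
    ![0, -u2/u3, 1, 0, 0, 0],
    ![1, 0, 0, 0, 0, 0]]

variable {u1 u2 u3 v1 v2 v3 : ℝ}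

theorem diagonal_signs_mul_self : diagonal signs * diagonal signs = 1 := by
  rw [diagonal_mul_diagonal, ← diagonal_one]
  congr 1
  ext i
  fin_cases i <;> simp [signs]

theorem eq_diagonal_signs_mul_one_add_vecMulVec (hu2 : u2 ≠ 0) (hu3 : u3 ≠ 0) (hv1 : v1 ≠ 0)
    (hv3 : v3 ≠ 0) :
    Hmat u1 u2 u3 v1 v2 v3 =
      diagonal signs * (1 + vecMulVec (col u1 u2 u3 v1 v2 v3) (row u2 u3 v1 v3)) := by
  ext i j
  fin_cases i <;> fin_cases j <;> simp [Hmat, signs, col, row, diagonal_mul, one_apply] <;>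
    field_simp <;> norm_num

theorem row_dotProduct_col (hu2 : u2 ≠ 0) (hu3 : u3 ≠ 0) (hv1 : v1 ≠ 0) (hv3 : v3 ≠ 0) :
    row u2 u3 v1 v3 ⬝ᵥ col u1 u2 u3 v1 v2 v3 = 4 := by
  simp only [dotProduct, row, col, Fin.sum_univ_six, cons_val_zero, cons_val_one, cons_val,
    zero_mul, inv_mul_cancel₀, hu2, hu3, hv1, hv3, ne_eq, not_false_eq_true, zero_add, add_zero]
  norm_num

theorem row_dotProduct_signs_mulVec_col (hu2 : u2 ≠ 0) (hu3 : u3 ≠ 0) (hv1 : v1 ≠ 0)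
    (hv3 : v3 ≠ 0) : row u2 u3 v1 v3 ⬝ᵥ diagonal signs *ᵥ col u1 u2 u3 v1 v2 v3 = 0 := by
  simp [row, signs, col, mulVec_diagonal, dotProduct, Fin.sum_univ_six, hu2, hu3, hv1, hv3]

theorem eigvecs_zero (hu3 : u3 ≠ 0) :
    eigvecs u1 u2 u3 v1 v2 v3 0 =
      (2 * u3)⁻¹ • (col u1 u2 u3 v1 v2 v3 + diagonal signs *ᵥ col u1 u2 u3 v1 v2 v3) := by
  ext i
  rw [Pi.smul_apply, Pi.add_apply, mulVec_diagonal]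
  fin_cases i <;> simp [eigvecs, col, signs] <;> field_simp <;> ring

theorem eigvecs_one (hv3 : v3 ≠ 0) :
    eigvecs u1 u2 u3 v1 v2 v3 1 =
      (2 * v3)⁻¹ • (col u1 u2 u3 v1 v2 v3 - diagonal signs *ᵥ col u1 u2 u3 v1 v2 v3) := by
  ext i
  rw [Pi.smul_apply, Pi.sub_apply, mulVec_diagonal]
  fin_cases i <;> simp [eigvecs, col, signs] <;> field_simp <;> ring

theorem row_dotProduct_eigvecs_of_two_le (hu2 : u2 ≠ 0) (hu3 : u3 ≠ 0) (hv1 : v1 ≠ 0)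
    (hv3 : v3 ≠ 0) {i : Fin 6} (hi : 2 ≤ i) :
    row u2 u3 v1 v3 ⬝ᵥ eigvecs u1 u2 u3 v1 v2 v3 i = 0 ∧
      row u2 u3 v1 v3 ⬝ᵥ diagonal signs *ᵥ eigvecs u1 u2 u3 v1 v2 v3 i = 0 := by
  fin_cases i <;> simp [Fin.le_def] at hi <;> constructor <;>
    simp [eigvecs, row, signs, mulVec_diagonal, dotProduct, Fin.sum_univ_six] <;>
    field_simp <;> ring

theorem sq_mulVec_eigvecs_zero (hu2 : u2 ≠ 0) (hu3 : u3 ≠ 0) (hv1 : v1 ≠ 0) (hv3 : v3 ≠ 0) :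
    Hmat u1 u2 u3 v1 v2 v3 ^ 2 *ᵥ eigvecs u1 u2 u3 v1 v2 v3 0 =
      (5 : ℝ) • eigvecs u1 u2 u3 v1 v2 v3 0 := by
  rw [eq_diagonal_signs_mul_one_add_vecMulVec hu2 hu3 hv1 hv3, eigvecs_zero hu3, mulVec_smul,
    sq_mul_one_add_vecMulVec_mulVec_add diagonal_signs_mul_self
      (row_dotProduct_signs_mulVec_col hu2 hu3 hv1 hv3), row_dotProduct_col hu2 hu3 hv1 hv3]
  module

theorem sq_mulVec_eigvecs_one (hu2 : u2 ≠ 0) (hu3 : u3 ≠ 0) (hv1 : v1 ≠ 0) (hv3 : v3 ≠ 0) :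
    Hmat u1 u2 u3 v1 v2 v3 ^ 2 *ᵥ eigvecs u1 u2 u3 v1 v2 v3 1 =
      (5 : ℝ) • eigvecs u1 u2 u3 v1 v2 v3 1 := by
  rw [eq_diagonal_signs_mul_one_add_vecMulVec hu2 hu3 hv1 hv3, eigvecs_one hv3, mulVec_smul,
    sq_mul_one_add_vecMulVec_mulVec_sub diagonal_signs_mul_self
      (row_dotProduct_signs_mulVec_col hu2 hu3 hv1 hv3), row_dotProduct_col hu2 hu3 hv1 hv3]
  module

theorem sq_mulVec_eigvecs_of_two_le (hu2 : u2 ≠ 0) (hu3 : u3 ≠ 0) (hv1 : v1 ≠ 0)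
    (hv3 : v3 ≠ 0) {i : Fin 6} (hi : 2 ≤ i) :
    Hmat u1 u2 u3 v1 v2 v3 ^ 2 *ᵥ eigvecs u1 u2 u3 v1 v2 v3 i = eigvecs u1 u2 u3 v1 v2 v3 i := by
  obtain ⟨hrow, hrow_signs⟩ := row_dotProduct_eigvecs_of_two_le hu2 hu3 hv1 hv3 hi
  rw [eq_diagonal_signs_mul_one_add_vecMulVec hu2 hu3 hv1 hv3]
  exact sq_mul_one_add_vecMulVec_mulVec_of_dotProduct_eq_zero diagonal_signs_mul_self
    (row_dotProduct_signs_mulVec_col hu2 hu3 hv1 hv3) hrow hrow_signs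

theorem linearIndependent_eigvecs (hu : u2 / u3 ≠ 0) (hv : v1 / v3 ≠ 0) :
    LinearIndependent ℝ (eigvecs u1 u2 u3 v1 v2 v3) := by
  rw [Fintype.linearIndependent_iff]
  intro c hc
  have h := fun j => congrFun hc j
  simp only [eigvecs, Finset.sum_apply, Pi.smul_apply, cons_val', cons_val_fin_one, smul_eq_mul,
    Fin.sum_univ_six, Fin.isValue, cons_val_zero, cons_val_one, cons_val, Pi.zero_apply,
    Fin.forall_fin_succ, mul_zero, add_zero, mul_one, cons_val_succ, zero_add, forall_const] at h
  obtain ⟨h0, h1, h2, h3, h4, h5⟩ := h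
  have hc04 : c 0 = c 4 := by
    have : (c 0 - c 4) * (u2 / u3) = 0 := by rw [← h1]; ring
    exact sub_eq_zero.mp ((mul_eq_zero.mp this).resolve_right hu)
  have hc12 : c 1 = c 2 := by
    have : (c 1 - c 2) * (v1 / v3) = 0 := by rw [← h3]; ring
    exact sub_eq_zero.mp ((mul_eq_zero.mp this).resolve_right hv)
  have hc0 : c 0 = 0 := by linarith
  have hc1 : c 1 = 0 := by linarith
  rw [hc0] at h0
  rw [hc1] at h4
  intro i
  fin_cases i <;> simp <;> linarith

end Hmat

theorem Hmat_sq_eigenbasis_general (u1 u2 u3 v1 v2 v3 : ℝ) (hu2 : u2 ≠ 0)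
    (hu3 : u3 ≠ 0) (hv1 : v1 ≠ 0) (hv3 : v3 ≠ 0) :
    letI b : Fin 6 → (Fin 6 → ℝ) :=
      ![![u1/u3, u2/u3, 1, 0, 0, 0],
        ![0, 0, 0, v1/v3, v2/v3, 1],
        ![0, 0, 0, -v1/v3, 0, 1],
        ![0, 0, 0, 0, 1, 0],
        ![0, -u2/u3, 1, 0, 0, 0],
        ![1, 0, 0, 0, 0, 0]]
    LinearIndependent ℝ b ∧ Submodule.span ℝ (Set.range b) = ⊤ ∧
    ((Hmat u1 u2 u3 v1 v2 v3) ^ 2).mulVec (b 0) = (5 : ℝ) • b 0 ∧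
    ((Hmat u1 u2 u3 v1 v2 v3) ^ 2).mulVec (b 1) = (5 : ℝ) • b 1 ∧
    ((Hmat u1 u2 u3 v1 v2 v3) ^ 2).mulVec (b 2) = b 2 ∧
    ((Hmat u1 u2 u3 v1 v2 v3) ^ 2).mulVec (b 3) = b 3 ∧
    ((Hmat u1 u2 u3 v1 v2 v3) ^ 2).mulVec (b 4) = b 4 ∧
    ((Hmat u1 u2 u3 v1 v2 v3) ^ 2).mulVec (b 5) = b 5 := by
  have hli := Hmat.linearIndependent_eigvecs (u1 := u1) (v2 := v2)
    (div_ne_zero hu2 hu3) (div_ne_zero hv1 hv3)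
  have hfix {i : Fin 6} (hi : 2 ≤ i) := Hmat.sq_mulVec_eigvecs_of_two_le (u1 := u1) (v2 := v2)
    hu2 hu3 hv1 hv3 hi
  exact ⟨hli, hli.span_eq_top_of_card_eq_finrank (by simp),
    Hmat.sq_mulVec_eigvecs_zero hu2 hu3 hv1 hv3, Hmat.sq_mulVec_eigvecs_one hu2 hu3 hv1 hv3,
    hfix (by decide), hfix (by decide), hfix (by decide), hfix (by decide)⟩

/-- The six stated vectors form a basis of ℝ⁶ consisting of eigenvectors of
H², with eigenvalue 5 for the first two and 1 for the other four. -/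
theorem Hmat_sq_eigenbasis (u1 u2 u3 v1 v2 v3 : ℝ) (hu1 : u1 ≠ 0) (hu2 : u2 ≠ 0)
    (hu3 : u3 ≠ 0) (hv1 : v1 ≠ 0) (hv2 : v2 ≠ 0) (hv3 : v3 ≠ 0) :
    letI b : Fin 6 → (Fin 6 → ℝ) :=
      ![![u1/u3, u2/u3, 1, 0, 0, 0],
        ![0, 0, 0, v1/v3, v2/v3, 1],
        ![0, 0, 0, -v1/v3, 0, 1],
        ![0, 0, 0, 0, 1, 0],
        ![0, -u2/u3, 1, 0, 0, 0],
        ![1, 0, 0, 0, 0, 0]]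
    LinearIndependent ℝ b ∧ Submodule.span ℝ (Set.range b) = ⊤ ∧
    ((Hmat u1 u2 u3 v1 v2 v3) ^ 2).mulVec (b 0) = (5 : ℝ) • b 0 ∧
    ((Hmat u1 u2 u3 v1 v2 v3) ^ 2).mulVec (b 1) = (5 : ℝ) • b 1 ∧
    ((Hmat u1 u2 u3 v1 v2 v3) ^ 2).mulVec (b 2) = b 2 ∧
    ((Hmat u1 u2 u3 v1 v2 v3) ^ 2).mulVec (b 3) = b 3 ∧
    ((Hmat u1 u2 u3 v1 v2 v3) ^ 2).mulVec (b 4) = b 4 ∧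
    ((Hmat u1 u2 u3 v1 v2 v3) ^ 2).mulVec (b 5) = b 5 :=
  Hmat_sq_eigenbasis_general u1 u2 u3 v1 v2 v3 hu2 hu3 hv1 hv3
end

section
/- Let u₁,u₂,u₃,v₁,v₂,v₃ be nonzero real numbers. Then det(Hᵀ·H) = 25, and 1 is an eigenvalue of the symmetric matrix Hᵀ·H with algebraic multiplicity at least 4; equivalently, (X − 1)⁴ divides the characteristic polynomial of Hᵀ·H, i.e. H has at least four singular values equal to 1 and the product of all six singular values of H is 5. -/
open Matrix Polynomial

/-!
With `a = (u₁, u₂, u₃, v₁, v₂, v₃)`, `w = (0, 1/u₂, 1/u₃, 1/v₁, 0, 1/v₃)` and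
`S = diag(1, 1, 1, -1, -1, -1)` we have `H = S (1 + a wᵀ)`. Since `SᵀS = 1`,
`HᵀH = (1 + w aᵀ)(1 + a wᵀ) = 1 + w (a + |a|² w)ᵀ + a wᵀ` is the identity plus a matrix
of rank at most two, so `(X - 1)⁴` divides its characteristic polynomial. By the matrix
determinant lemma `det (HᵀH) = det (1 + a wᵀ)² = (1 + w ⬝ a)² = 25`, because `w ⬝ a = 4`.
-/

namespace Matrix

variable {n k R : Type*} [CommRing R]

theorem X_sub_one_pow_dvd_charpoly_one_add_mul [Fintype n] [DecidableEq n] [Fintype k]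
    [DecidableEq k] (U : Matrix n k R) (V : Matrix k n R) :
    (X - C 1) ^ (Fintype.card n - Fintype.card k) ∣ (1 + U * V).charpoly := by
  rcases le_or_gt (Fintype.card k) (Fintype.card n) with hle | hlt
  · have h : 1 + U * V = U * V - scalar n (-1 : R) := by simp [sub_eq_add_neg, add_comm]
    rw [h, charpoly_sub_scalar, charpoly_mul_comm_of_le U V hle, mul_comp, X_pow_comp, map_neg,
      ← sub_eq_add_neg]
    exact dvd_mul_right _ _
  · simp [Nat.sub_eq_zero_of_le hlt.le]

theorem X_sub_one_pow_dvd_charpoly_one_add_vecMulVec_add_vecMulVec [Fintype n] [DecidableEq n]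
    (a b c d : n → R) :
    (X - C 1) ^ (Fintype.card n - 2) ∣ (1 + (vecMulVec a b + vecMulVec c d)).charpoly := by
  have hUV : vecMulVec a b + vecMulVec c d = of (fun i j => ![a i, c i] j) * of ![b, d] := by
    ext i j
    simp [mul_apply, Fin.sum_univ_two, vecMulVec_apply]
  simpa [hUV] using
    X_sub_one_pow_dvd_charpoly_one_add_mul (of fun i j => ![a i, c i] j) (of ![b, d])

theorem transpose_mul_self_one_add_vecMulVec [Fintype n] [DecidableEq n] (a w : n → R) :
    (1 + vecMulVec a w)ᵀ * (1 + vecMulVec a w)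
      = 1 + (vecMulVec w (a + (a ⬝ᵥ a) • w) + vecMulVec a w) := by
  simp only [transpose_add, transpose_one, transpose_vecMulVec, add_mul, mul_add, one_mul, mul_one,
    vecMulVec_mul_vecMulVec, vecMulVec_add, vecMulVec_smul]
  abel

theorem det_one_add_vecMulVec [Fintype n] [DecidableEq n] (a w : n → R) :
    (1 + vecMulVec a w).det = 1 + w ⬝ᵥ a := by
  rw [vecMulVec_eq Unit, det_one_add_replicateCol_mul_replicateRow]

theorem transpose_mul_self_orthogonal_mul [Fintype n] [DecidableEq n] {S A : Matrix n n R}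
    (hS : Sᵀ * S = 1) : (S * A)ᵀ * (S * A) = Aᵀ * A := by
  rw [transpose_mul, Matrix.mul_assoc, ← Matrix.mul_assoc Sᵀ, hS, Matrix.one_mul]

end Matrix

theorem Hmat_eq_diagonal_mul_one_add_vecMulVec {u1 u2 u3 v1 v2 v3 : ℝ} (hu2 : u2 ≠ 0)
    (hu3 : u3 ≠ 0) (hv1 : v1 ≠ 0) (hv3 : v3 ≠ 0) :
    Hmat u1 u2 u3 v1 v2 v3 = diagonal ![1, 1, 1, -1, -1, -1] *
      (1 + vecMulVec ![u1, u2, u3, v1, v2, v3] ![0, u2⁻¹, u3⁻¹, v1⁻¹, 0, v3⁻¹]) := by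
  ext i j
  fin_cases i <;> fin_cases j <;> simp [Hmat, one_apply, div_eq_mul_inv, *] <;> norm_num

theorem singular_values_of_H_general (u1 u2 u3 v1 v2 v3 : ℝ)
    (hu2 : u2 ≠ 0) (hu3 : u3 ≠ 0) (hv1 : v1 ≠ 0) (hv3 : v3 ≠ 0) :
    ((Hmat u1 u2 u3 v1 v2 v3)ᵀ * Hmat u1 u2 u3 v1 v2 v3).det = 25 ∧
    (X - C 1) ^ 4 ∣ ((Hmat u1 u2 u3 v1 v2 v3)ᵀ * Hmat u1 u2 u3 v1 v2 v3).charpoly := by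
  set a : Fin 6 → ℝ := ![u1, u2, u3, v1, v2, v3]
  set w : Fin 6 → ℝ := ![0, u2⁻¹, u3⁻¹, v1⁻¹, 0, v3⁻¹]
  have hwa : w ⬝ᵥ a = 4 := by
    norm_num [w, a, dotProduct, Fin.sum_univ_succ, *]
  have hS : (diagonal ![1, 1, 1, -1, -1, -1] : Matrix (Fin 6) (Fin 6) ℝ)ᵀ *
      diagonal ![1, 1, 1, -1, -1, -1] = 1 := by
    rw [diagonal_transpose, diagonal_mul_diagonal, ← diagonal_one]
    congr 1
    ext i
    fin_cases i <;> norm_num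
  rw [Hmat_eq_diagonal_mul_one_add_vecMulVec hu2 hu3 hv1 hv3, transpose_mul_self_orthogonal_mul hS]
  constructor
  · rw [det_mul, det_transpose, det_one_add_vecMulVec, hwa]
    norm_num
  · rw [transpose_mul_self_one_add_vecMulVec]
    exact X_sub_one_pow_dvd_charpoly_one_add_vecMulVec_add_vecMulVec _ _ _ _

/-- det(HᵀH) = 25 and (X − 1)⁴ divides the characteristic polynomial of HᵀH,
i.e. 1 is an eigenvalue of HᵀH with algebraic multiplicity at least 4: H has at
least four singular values equal to 1 and the product of all six singular
values is 5. -/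
theorem singular_values_of_H (u1 u2 u3 v1 v2 v3 : ℝ) (hu1 : u1 ≠ 0)
    (hu2 : u2 ≠ 0) (hu3 : u3 ≠ 0) (hv1 : v1 ≠ 0) (hv2 : v2 ≠ 0) (hv3 : v3 ≠ 0) :
    ((Hmat u1 u2 u3 v1 v2 v3)ᵀ * Hmat u1 u2 u3 v1 v2 v3).det = 25 ∧
    (X - C 1) ^ 4 ∣ ((Hmat u1 u2 u3 v1 v2 v3)ᵀ * Hmat u1 u2 u3 v1 v2 v3).charpoly :=
  singular_values_of_H_general u1 u2 u3 v1 v2 v3 hu2 hu3 hv1 hv3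
end

section
/- Let u₁,u₂,u₃,v₁,v₂,v₃ be nonzero real numbers. Then the largest singular value of H is strictly greater than 1 and the smallest singular value of H is strictly less than 1; equivalently, there exist unit vectors x, y ∈ ℝ⁶ with ‖H·x‖ > 1 and ‖H·y‖ < 1. -/
/-! The matrix fixes `e₀` (its first column is `e₀`) while its first row has the nonzero entry
`H₀₁ = u₁/u₂`. Along `y = e₀ + t e₁` this gives `‖H y‖² - ‖y‖² = 2 H₀₁ t + O(t²)`, which takes
both signs as `t` runs over small values of either sign; normalising `y` yields the two unit
vectors. -/

open Matrix

lemma exists_pos_and_exists_neg_quadratic {α : ℝ} (hα : α ≠ 0) (β : ℝ) :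
    (∃ t, 0 < 2 * α * t + β * t ^ 2) ∧ ∃ t, 2 * α * t + β * t ^ 2 < 0 := by
  set M := |β| + 1
  have hM : 0 < M := by positivity
  have hvalue (s : ℝ) (hs : s ^ 2 = 1) :
      2 * α * (s * α / M) + β * (s * α / M) ^ 2 = (α / M) ^ 2 * (2 * s * M + β) := by
    rw [div_pow, mul_pow, hs]
    field_simp
  have hαM : 0 < (α / M) ^ 2 := by positivity
  refine ⟨⟨1 * α / M, ?_⟩, ⟨-1 * α / M, ?_⟩⟩
  · rw [hvalue 1 (one_pow 2)]
    exact mul_pos hαM (by linarith [neg_abs_le β])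
  · rw [hvalue (-1) (by norm_num)]
    exact mul_neg_of_pos_of_neg hαM (by linarith [le_abs_self β])

section NormedSpace

variable {F : Type*} [NormedAddCommGroup F] [NormedSpace ℝ F]

lemma norm_apply_inv_norm_smul (T : F →ₗ[ℝ] F) (y : F) :
    ‖T (‖y‖⁻¹ • y)‖ = ‖T y‖ / ‖y‖ := by
  rw [map_smul, norm_smul, norm_inv, norm_norm, inv_mul_eq_div]

lemma exists_norm_eq_one_and_one_lt_norm_apply (T : F →ₗ[ℝ] F) {y : F} (hy : ‖y‖ < ‖T y‖) :
    ∃ x, ‖x‖ = 1 ∧ 1 < ‖T x‖ := by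
  have hy0 : y ≠ 0 := by rintro rfl; simp at hy
  refine ⟨‖y‖⁻¹ • y, norm_smul_inv_norm hy0, ?_⟩
  rwa [norm_apply_inv_norm_smul, one_lt_div (norm_pos_iff.mpr hy0)]

lemma exists_norm_eq_one_and_norm_apply_lt_one (T : F →ₗ[ℝ] F) {y : F} (hy : ‖T y‖ < ‖y‖) :
    ∃ x, ‖x‖ = 1 ∧ ‖T x‖ < 1 := by
  have hy0 : y ≠ 0 := by rintro rfl; simp at hy
  refine ⟨‖y‖⁻¹ • y, norm_smul_inv_norm hy0, ?_⟩
  rwa [norm_apply_inv_norm_smul, div_lt_one (norm_pos_iff.mpr hy0)]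

end NormedSpace

section InnerProductSpace

variable {E : Type*} [NormedAddCommGroup E] [InnerProductSpace ℝ E]

lemma norm_sq_apply_sub_norm_sq_of_apply_eq_self (T : E →ₗ[ℝ] E) {e : E} (he : T e = e)
    (w : E) (t : ℝ) :
    ‖T (e + t • w)‖ ^ 2 - ‖e + t • w‖ ^ 2 =
      2 * inner ℝ (T w - w) e * t + (‖T w‖ ^ 2 - ‖w‖ ^ 2) * t ^ 2 := by
  rw [map_add, map_smul, he, norm_add_sq_real, norm_add_sq_real, norm_smul, norm_smul,
    real_inner_smul_right, real_inner_smul_right, inner_sub_left, real_inner_comm e,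
    real_inner_comm e, Real.norm_eq_abs, mul_pow, mul_pow, sq_abs]
  ring

theorem exists_norm_eq_one_one_lt_norm_apply_and_norm_apply_lt_one (T : E →ₗ[ℝ] E) {e w : E}
    (he : T e = e) (hw : inner ℝ (T w - w) e ≠ 0) :
    ∃ x y : E, ‖x‖ = 1 ∧ ‖y‖ = 1 ∧ 1 < ‖T x‖ ∧ ‖T y‖ < 1 := by
  obtain ⟨⟨t, ht⟩, ⟨s, hs⟩⟩ := exists_pos_and_exists_neg_quadratic hw (‖T w‖ ^ 2 - ‖w‖ ^ 2)
  rw [← norm_sq_apply_sub_norm_sq_of_apply_eq_self T he, sub_pos] at ht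
  rw [← norm_sq_apply_sub_norm_sq_of_apply_eq_self T he, sub_neg] at hs
  obtain ⟨x, hx, hTx⟩ := exists_norm_eq_one_and_one_lt_norm_apply T
    ((sq_lt_sq₀ (norm_nonneg _) (norm_nonneg _)).mp ht)
  obtain ⟨y, hy, hTy⟩ := exists_norm_eq_one_and_norm_apply_lt_one T
    ((sq_lt_sq₀ (norm_nonneg _) (norm_nonneg _)).mp hs)
  exact ⟨x, y, hx, hy, hTx, hTy⟩

end InnerProductSpace

theorem Matrix.exists_norm_eq_one_one_lt_norm_toEuclideanLin_and_lt_one {n : Type*} [Fintype n]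
    [DecidableEq n] (A : Matrix n n ℝ) {i j : n} (hcol : A.col i = Pi.single i 1) (hij : j ≠ i)
    (hA : A i j ≠ 0) :
    ∃ x y : EuclideanSpace ℝ n, ‖x‖ = 1 ∧ ‖y‖ = 1 ∧
      1 < ‖toEuclideanLin A x‖ ∧ ‖toEuclideanLin A y‖ < 1 := by
  refine exists_norm_eq_one_one_lt_norm_apply_and_norm_apply_lt_one (toEuclideanLin A)
    (e := EuclideanSpace.single i 1) (w := EuclideanSpace.single j 1) ?_ ?_
  · rw [toLpLin_apply, PiLp.ofLp_single, mulVec_single_one, hcol, PiLp.toLp_single]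
  · simpa [EuclideanSpace.inner_single_right, toLpLin_apply, mulVec_single_one, hij.symm] using hA

theorem H_singular_values_straddle_one_general (u1 u2 u3 v1 v2 v3 : ℝ) (hu1 : u1 ≠ 0)
    (hu2 : u2 ≠ 0) :
    ∃ x y : EuclideanSpace ℝ (Fin 6), ‖x‖ = 1 ∧ ‖y‖ = 1 ∧
      1 < ‖((WithLp.equiv 2 (Fin 6 → ℝ)).symm
            ((Hmat u1 u2 u3 v1 v2 v3).mulVec (WithLp.equiv 2 (Fin 6 → ℝ) x)))‖ ∧
      ‖((WithLp.equiv 2 (Fin 6 → ℝ)).symm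
            ((Hmat u1 u2 u3 v1 v2 v3).mulVec (WithLp.equiv 2 (Fin 6 → ℝ) y)))‖ < 1 := by
  have hcol : (Hmat u1 u2 u3 v1 v2 v3).col 0 = Pi.single 0 1 := by
    ext k
    fin_cases k <;> simp [Hmat]
  exact (Hmat u1 u2 u3 v1 v2 v3).exists_norm_eq_one_one_lt_norm_toEuclideanLin_and_lt_one hcol
    (j := 1) (by decide) (div_ne_zero hu1 hu2)

/-- The largest singular value of H is > 1 and the smallest is < 1:
there exist Euclidean unit vectors x, y with ‖H·x‖ > 1 and ‖H·y‖ < 1. -/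
theorem H_singular_values_straddle_one (u1 u2 u3 v1 v2 v3 : ℝ) (hu1 : u1 ≠ 0)
    (hu2 : u2 ≠ 0) (hu3 : u3 ≠ 0) (hv1 : v1 ≠ 0) (hv2 : v2 ≠ 0) (hv3 : v3 ≠ 0) :
    ∃ x y : EuclideanSpace ℝ (Fin 6), ‖x‖ = 1 ∧ ‖y‖ = 1 ∧
      1 < ‖((WithLp.equiv 2 (Fin 6 → ℝ)).symm
            ((Hmat u1 u2 u3 v1 v2 v3).mulVec (WithLp.equiv 2 (Fin 6 → ℝ) x)))‖ ∧
      ‖((WithLp.equiv 2 (Fin 6 → ℝ)).symm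
            ((Hmat u1 u2 u3 v1 v2 v3).mulVec (WithLp.equiv 2 (Fin 6 → ℝ) y)))‖ < 1 :=
  H_singular_values_straddle_one_general u1 u2 u3 v1 v2 v3 hu1 hu2
end

section
/- Let u₁,u₂,u₃,v₁,v₂,v₃ be nonzero real numbers and let ϖ₁,…,ϖ₅ be arbitrary real numbers. Define e ∈ ℝ⁶ by e = (u₁(ϖ₁+ϖ₂+ϖ₃−ϖ₄+ϖ₅), −u₂(ϖ₁−ϖ₂+ϖ₃+ϖ₄+ϖ₅), u₃(ϖ₁+ϖ₂+ϖ₃+ϖ₄+ϖ₅), v₁(ϖ₁−ϖ₂−ϖ₃−ϖ₄−ϖ₅), −v₂(ϖ₁+ϖ₂−ϖ₃−ϖ₄+ϖ₅), −v₃(ϖ₁+ϖ₂−ϖ₃−ϖ₄−ϖ₅)). Then H·e = (e₁, e₂, e₃, −e₄, −e₅, −e₆); in particular ‖H·e‖ = ‖e‖, so H acts as a Euclidean isometry on the 5-dimensional subspace spanned by such vectors e. -/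
/-!
`Hmat = X * Hcore * X⁻¹` for the integer matrix `Hcore` and `X = diag(u₁,u₂,u₃,v₁,v₂,v₃)`, and
`e = X * Nmat *ᵥ ϖ` for an integer `6 × 5` matrix `Nmat` with `Hcore * Nmat = J * Nmat`, where
`J = diag(1,1,1,-1,-1,-1)`. Since diagonal matrices commute, `Hmat *ᵥ e = X * J * Nmat *ᵥ ϖ = J *ᵥ e`,
and the sign matrix `J` is a Euclidean isometry.
-/

open Matrix

theorem Matrix.mul_diagonal_mul_eq_of_intertwine {n m R : Type*} [Fintype n] [DecidableEq n]
    [CommSemiring R] {A B : Matrix n n R} {x s : n → R} {N : Matrix n m R}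
    (hAB : A * diagonal x = diagonal x * B) (hBN : B * N = diagonal s * N) :
    A * (diagonal x * N) = diagonal s * (diagonal x * N) := by
  rw [← Matrix.mul_assoc, hAB, Matrix.mul_assoc, hBN, ← Matrix.mul_assoc, ← Matrix.mul_assoc,
    diagonal_mul_diagonal, diagonal_mul_diagonal]
  simp_rw [mul_comm (x _)]

theorem EuclideanSpace.norm_toLp_diagonal_mulVec {𝕜 n : Type*} [RCLike 𝕜] [Fintype n]
    [DecidableEq n] {s : n → 𝕜} (hs : ∀ i, ‖s i‖ = 1) (v : n → 𝕜) :
    ‖WithLp.toLp 2 (diagonal s *ᵥ v)‖ = ‖WithLp.toLp 2 v‖ := by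
  simp only [EuclideanSpace.norm_eq, mulVec_diagonal, norm_mul, hs, one_mul]

def hSigns : Fin 6 → ℝ := ![1, 1, 1, -1, -1, -1]

def Hcore : Matrix (Fin 6) (Fin 6) ℝ :=
  !![1, 1, 1, 1, 0, 1;
     0, 2, 1, 1, 0, 1;
     0, 1, 2, 1, 0, 1;
     0, -1, -1, -2, 0, -1;
     0, -1, -1, -1, -1, -1;
     0, -1, -1, -1, 0, -2]

def Nmat : Matrix (Fin 6) (Fin 5) ℝ :=
  !![1, 1, 1, -1, 1;
     -1, 1, -1, -1, -1;
     1, 1, 1, 1, 1;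
     1, -1, -1, -1, -1;
     -1, -1, 1, 1, -1;
     -1, -1, 1, 1, 1]

theorem Hmat_mul_diagonal {u1 u2 u3 v1 v2 v3 : ℝ} (hu2 : u2 ≠ 0) (hu3 : u3 ≠ 0) (hv1 : v1 ≠ 0)
    (hv3 : v3 ≠ 0) :
    Hmat u1 u2 u3 v1 v2 v3 * diagonal ![u1, u2, u3, v1, v2, v3] =
      diagonal ![u1, u2, u3, v1, v2, v3] * Hcore := by
  ext i j
  fin_cases i <;> fin_cases j <;> simp [Hmat, Hcore] <;> field_simp

theorem Hcore_mul_Nmat : Hcore * Nmat = diagonal hSigns * Nmat := by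
  ext i j
  fin_cases i <;> fin_cases j <;>
    simp [Hcore, Nmat, hSigns, Matrix.mul_apply, Fin.sum_univ_six] <;> norm_num

theorem Hmat_mulVec_eq_diagonal_hSigns_mulVec {u1 u2 u3 v1 v2 v3 : ℝ} (hu2 : u2 ≠ 0)
    (hu3 : u3 ≠ 0) (hv1 : v1 ≠ 0) (hv3 : v3 ≠ 0) {e : Fin 6 → ℝ} (w : Fin 5 → ℝ)
    (he : e = (diagonal ![u1, u2, u3, v1, v2, v3] * Nmat) *ᵥ w) :
    Hmat u1 u2 u3 v1 v2 v3 *ᵥ e = diagonal hSigns *ᵥ e := by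
  rw [he, mulVec_mulVec, mulVec_mulVec, Matrix.mul_diagonal_mul_eq_of_intertwine
    (Hmat_mul_diagonal hu2 hu3 hv1 hv3) Hcore_mul_Nmat]

theorem mulVec_eq_neg_last_three_and_norm_eq {A : Matrix (Fin 6) (Fin 6) ℝ} {e : Fin 6 → ℝ}
    (h : A *ᵥ e = diagonal hSigns *ᵥ e) :
    A *ᵥ e = ![e 0, e 1, e 2, -e 3, -e 4, -e 5] ∧
      ‖(WithLp.equiv 2 (Fin 6 → ℝ)).symm (A *ᵥ e)‖ = ‖(WithLp.equiv 2 (Fin 6 → ℝ)).symm e‖ := by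
  rw [h]
  refine ⟨?_, EuclideanSpace.norm_toLp_diagonal_mulVec (fun i => by fin_cases i <;> simp [hSigns]) e⟩
  ext i
  fin_cases i <;> simp [hSigns, mulVec_diagonal]

theorem H_isometry_on_N_general (u1 u2 u3 v1 v2 v3 : ℝ) (hu2 : u2 ≠ 0)
    (hu3 : u3 ≠ 0) (hv1 : v1 ≠ 0) (hv3 : v3 ≠ 0)
    (w1 w2 w3 w4 w5 : ℝ) :
    letI e : Fin 6 → ℝ :=
      ![u1 * (w1 + w2 + w3 - w4 + w5),
        -u2 * (w1 - w2 + w3 + w4 + w5),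
        u3 * (w1 + w2 + w3 + w4 + w5),
        v1 * (w1 - w2 - w3 - w4 - w5),
        -v2 * (w1 + w2 - w3 - w4 + w5),
        -v3 * (w1 + w2 - w3 - w4 - w5)]
    (Hmat u1 u2 u3 v1 v2 v3).mulVec e =
      ![e 0, e 1, e 2, -e 3, -e 4, -e 5] ∧
    ‖((WithLp.equiv 2 (Fin 6 → ℝ)).symm ((Hmat u1 u2 u3 v1 v2 v3).mulVec e))‖ =
      ‖((WithLp.equiv 2 (Fin 6 → ℝ)).symm e)‖ := by
  refine mulVec_eq_neg_last_three_and_norm_eq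
    (Hmat_mulVec_eq_diagonal_hSigns_mulVec hu2 hu3 hv1 hv3 ![w1, w2, w3, w4, w5] ?_)
  ext i
  fin_cases i <;> simp [Nmat, mulVec, dotProduct, Fin.sum_univ_five] <;> ring

/-- For the linear combination e of the columns of N, H·e only flips the signs of
the last three components of e; in particular ‖H·e‖ = ‖e‖, so H acts as a
Euclidean isometry on the 5-dimensional subspace spanned by such vectors. -/
theorem H_isometry_on_N (u1 u2 u3 v1 v2 v3 : ℝ) (hu1 : u1 ≠ 0) (hu2 : u2 ≠ 0)
    (hu3 : u3 ≠ 0) (hv1 : v1 ≠ 0) (hv2 : v2 ≠ 0) (hv3 : v3 ≠ 0)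
    (w1 w2 w3 w4 w5 : ℝ) :
    letI e : Fin 6 → ℝ :=
      ![u1 * (w1 + w2 + w3 - w4 + w5),
        -u2 * (w1 - w2 + w3 + w4 + w5),
        u3 * (w1 + w2 + w3 + w4 + w5),
        v1 * (w1 - w2 - w3 - w4 - w5),
        -v2 * (w1 + w2 - w3 - w4 + w5),
        -v3 * (w1 + w2 - w3 - w4 - w5)]
    (Hmat u1 u2 u3 v1 v2 v3).mulVec e =
      ![e 0, e 1, e 2, -e 3, -e 4, -e 5] ∧
    ‖((WithLp.equiv 2 (Fin 6 → ℝ)).symm ((Hmat u1 u2 u3 v1 v2 v3).mulVec e))‖ =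
      ‖((WithLp.equiv 2 (Fin 6 → ℝ)).symm e)‖ :=
  H_isometry_on_N_general u1 u2 u3 v1 v2 v3 hu2 hu3 hv1 hv3 w1 w2 w3 w4 w5
end

section
/- Let u₁,u₂,u₃,v₁,v₂,v₃ be nonzero real numbers and γ₁, γ₂ real numbers. Let E be the 6×6 real matrix whose first five columns are the columns of the matrix N with rows (u₁, u₁, u₁, −u₁, u₁), (−u₂, u₂, −u₂, −u₂, −u₂), (u₃, u₃, u₃, u₃, u₃), (v₁, −v₁, −v₁, −v₁, −v₁), (−v₂, −v₂, v₂, v₂, −v₂), (−v₃, −v₃, v₃, v₃, v₃), and whose sixth column is (γ₁u₁/u₃, γ₁u₂/u₃, γ₁, γ₂v₁/v₃, γ₂v₂/v₃, γ₂). Then det(E) = −32(γ₂u₃ + γ₁v₃)·u₁u₂v₁v₂. In particular det(E) = 0 if and only if γ₂u₃ + γ₁v₃ = 0, in which case the sixth column is a scalar multiple θ·(u₁, u₂, u₃, −v₁, −v₂, −v₃). -/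
/-!
Every row of `E` is its diagonal scalar (`u₁, u₂, u₃, v₁, v₂, v₃` in turn) times a row of
signs, completed by `γ₁/u₃` in the first three rows and `γ₂/v₃` in the last three. So `det E`
is `u₁u₂u₃v₁v₂v₃` times the determinant of a sign pattern with last column
`(a, a, a, b, b, b)`, and cofactor expansion evaluates the latter to `-32 (a + b)`.
-/

open Matrix

/-- The 6×6 matrix E: the matrix N augmented on the right by the column
(γ₁u₁/u₃, γ₁u₂/u₃, γ₁, γ₂v₁/v₃, γ₂v₂/v₃, γ₂). -/
noncomputable def Emat (u1 u2 u3 v1 v2 v3 γ1 γ2 : ℝ) : Matrix (Fin 6) (Fin 6) ℝ :=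
  !![u1, u1, u1, -u1, u1, γ1*u1/u3;
     -u2, u2, -u2, -u2, -u2, γ1*u2/u3;
     u3, u3, u3, u3, u3, γ1;
     v1, -v1, -v1, -v1, -v1, γ2*v1/v3;
     -v2, -v2, v2, v2, -v2, γ2*v2/v3;
     -v3, -v3, v3, v3, v3, γ2]

def signPattern (a b : ℝ) : Matrix (Fin 6) (Fin 6) ℝ :=
  !![1, 1, 1, -1, 1, a;
     -1, 1, -1, -1, -1, a;
     1, 1, 1, 1, 1, a;
     1, -1, -1, -1, -1, b;
     -1, -1, 1, 1, -1, b;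
     -1, -1, 1, 1, 1, b]

theorem det_signPattern (a b : ℝ) : (signPattern a b).det = -32 * (a + b) := by
  simp [signPattern, det_succ_row_zero, Fin.sum_univ_succ, Fin.succAbove]
  ring

theorem Emat_eq_diagonal_mul_signPattern {u1 u2 u3 v1 v2 v3 : ℝ} (γ1 γ2 : ℝ)
    (hu3 : u3 ≠ 0) (hv3 : v3 ≠ 0) :
    Emat u1 u2 u3 v1 v2 v3 γ1 γ2 =
      diagonal ![u1, u2, u3, v1, v2, v3] * signPattern (γ1 / u3) (γ2 / v3) := by
  ext i j
  fin_cases i <;> fin_cases j <;> simp [Emat, signPattern] <;> field_simp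

theorem det_Emat {u1 u2 u3 v1 v2 v3 : ℝ} (γ1 γ2 : ℝ) (hu3 : u3 ≠ 0) (hv3 : v3 ≠ 0) :
    (Emat u1 u2 u3 v1 v2 v3 γ1 γ2).det = -32 * (γ2*u3 + γ1*v3) * (u1*u2*v1*v2) := by
  rw [Emat_eq_diagonal_mul_signPattern γ1 γ2 hu3 hv3, det_mul, det_diagonal, det_signPattern,
    Fin.prod_univ_six]
  simp only [cons_val]
  field_simp
  ring

/-- det(E) = −32(γ₂u₃ + γ₁v₃)u₁u₂v₁v₂; in particular det(E) = 0 iff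
γ₂u₃ + γ₁v₃ = 0, in which case the sixth column is a scalar multiple
θ·(u₁, u₂, u₃, −v₁, −v₂, −v₃). -/
theorem Emat_det (u1 u2 u3 v1 v2 v3 γ1 γ2 : ℝ) (hu1 : u1 ≠ 0) (hu2 : u2 ≠ 0)
    (hu3 : u3 ≠ 0) (hv1 : v1 ≠ 0) (hv2 : v2 ≠ 0) (hv3 : v3 ≠ 0) :
    (Emat u1 u2 u3 v1 v2 v3 γ1 γ2).det = -32 * (γ2*u3 + γ1*v3) * (u1*u2*v1*v2) ∧
    ((Emat u1 u2 u3 v1 v2 v3 γ1 γ2).det = 0 ↔ γ2*u3 + γ1*v3 = 0) ∧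
    (γ2*u3 + γ1*v3 = 0 → ∃ θ : ℝ,
      (![γ1*u1/u3, γ1*u2/u3, γ1, γ2*v1/v3, γ2*v2/v3, γ2] : Fin 6 → ℝ) =
        θ • ![u1, u2, u3, -v1, -v2, -v3]) := by
  have hdet := det_Emat (u1 := u1) (u2 := u2) (v1 := v1) (v2 := v2) γ1 γ2 hu3 hv3
  refine ⟨hdet, ?_, fun h => ⟨γ1 / u3, ?_⟩⟩
  · rw [hdet]
    simp [hu1, hu2, hv1, hv2]
  · have hγ2 : γ2 = -(γ1 / u3) * v3 := by
      field_simp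
      linarith
    ext i
    fin_cases i <;> simp [hγ2] <;> field_simp
end
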